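/- arXiv:math/0605259 — 9 statements merged into one kernel-verified Lean document; each statement's English description precedes it below -/
import Mathlib

section
/- If c : 𝒫(X) → 𝒫(X) is a closure operation on a set X, then the map Φ(c) : 𝒫(X) → 𝒫(X) defined by Φ(c)(A) = c(A) ∩ c(X \ A) is an operation of boundary on X. -/
/-- A closure operation on a set `X` (axioms δ1–δ5). -/
def IsClosure {X : Type*} (c : Set X → Set X) : Prop :=
  c ∅ = ∅ ∧
  (∀ A : Set X, c (c A) ⊆ c A) ∧
  (∀ A B : Set X, c (A ∪ B) ⊆ c A ∪ c B) ∧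
  (∀ A B : Set X, A ⊆ B → c A ⊆ c B) ∧
  (∀ A : Set X, A ⊆ c A)

/-- An operation of boundary on a set `X` (axioms β1–β5). -/
def IsBoundary {X : Type*} (d : Set X → Set X) : Prop :=
  d ∅ = ∅ ∧
  (∀ A : Set X, d (d A) ⊆ d A) ∧
  (∀ A B : Set X, d (A ∪ B) ⊆ d A ∪ d B) ∧
  (∀ A B : Set X, A ⊆ B → d A ⊆ B ∪ d B) ∧
  (∀ A : Set X, d A = d Aᶜ)

/-- If `c` is a closure operation, then `Φ(c) : A ↦ c(A) ∩ c(X \ A)` is an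
operation of boundary. -/
theorem boundary_via_closure {X : Type*} (c : Set X → Set X)
    (hc : IsClosure c) :
    IsBoundary (fun A : Set X => c A ∩ c Aᶜ) := by
  obtain ⟨h1, h2, h3, h4, h5⟩ := hc
  refine ⟨?_, ?_, ?_, ?_, ?_⟩
  · simp [h1]
  · intro A x hx
    have hxc : x ∈ c (c A ∩ c Aᶜ) := hx.1
    constructor
    · exact h2 A (h4 _ _ (Set.inter_subset_left) hxc)
    · exact h2 Aᶜ (h4 _ _ (Set.inter_subset_right) hxc)
  · intro A B x hx
    obtain ⟨hx1, hx2⟩ := hx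
    have hA : x ∈ c Aᶜ := h4 _ _ (by simp [Set.compl_union]) hx2
    have hB : x ∈ c Bᶜ := h4 _ _ (by simp [Set.compl_union]) hx2
    rcases h3 A B hx1 with h | h
    · exact Or.inl ⟨h, hA⟩
    · exact Or.inr ⟨h, hB⟩
  · intro A B hAB x hx
    by_cases hxB : x ∈ B
    · exact Or.inl hxB
    · refine Or.inr ⟨h4 _ _ hAB hx.1, h5 Bᶜ hxB⟩
  · intro A
    simp [Set.inter_comm]
end

section
/- If ∂ : 𝒫(X) → 𝒫(X) is an operation of boundary on a set X, then the map Ψ(∂) : 𝒫(X) → 𝒫(X) defined by Ψ(∂)(A) = A ∪ ∂A is a closure operation on X. -/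
/-- If `∂` is an operation of boundary, then `Ψ(∂) : A ↦ A ∪ ∂A` is a
closure operation. -/
theorem closure_via_boundary {X : Type*} (d : Set X → Set X)
    (hd : IsBoundary d) :
    IsClosure (fun A : Set X => A ∪ d A) := by
  obtain ⟨h1, h2, h3, h4, h5⟩ := hd
  refine ⟨by simp [h1], ?_, ?_, ?_, fun A => Set.subset_union_left⟩
  · intro A
    simp only
    apply Set.union_subset Set.Subset.rfl
    intro x hx
    rcases h3 A (d A) hx with h | h
    · exact Or.inr h
    · exact Or.inr (h2 A h)
  · intro A B
    simp only
    apply Set.union_subset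
    · exact Set.union_subset_union Set.subset_union_left Set.subset_union_left
    · intro x hx
      rcases h3 A B hx with h | h
      · exact Or.inl (Or.inr h)
      · exact Or.inr (Or.inr h)
  · intro A B hAB
    simp only
    apply Set.union_subset
    · exact hAB.trans Set.subset_union_left
    · exact h4 A B hAB
end

section
/- If ∂ : 𝒫(X) → 𝒫(X) satisfies only axioms (β1)–(β4) (axiom (β5) is not assumed), then the map A ↦ A ∪ ∂A is a closure operation on X. -/
/-- If `∂` satisfies only the boundary axioms (β1)–(β4) (axiom (β5) is not
assumed), then `A ↦ A ∪ ∂A` is a closure operation. -/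
theorem closure_via_boundary_without_beta5 {X : Type*} (d : Set X → Set X)
    (hb1 : d ∅ = ∅)
    (hb2 : ∀ A : Set X, d (d A) ⊆ d A)
    (hb3 : ∀ A B : Set X, d (A ∪ B) ⊆ d A ∪ d B)
    (hb4 : ∀ A B : Set X, A ⊆ B → d A ⊆ B ∪ d B) :
    IsClosure (fun A : Set X => A ∪ d A) := by
  refine ⟨by simp [hb1], ?_, ?_, ?_, ?_⟩
  · intro A
    simp only
    apply Set.union_subset Set.Subset.rfl
    calc d (A ∪ d A) ⊆ d A ∪ d (d A) := hb3 A (d A)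
      _ ⊆ A ∪ d A := Set.union_subset (Set.subset_union_right)
          ((hb2 A).trans Set.subset_union_right)
  · intro A B
    simp only
    apply Set.union_subset
    · exact Set.union_subset_union Set.subset_union_left Set.subset_union_left
    · exact (hb3 A B).trans
        (Set.union_subset_union Set.subset_union_right Set.subset_union_right)
  · intro A B hAB
    exact Set.union_subset (hAB.trans Set.subset_union_left) (hb4 A B hAB)
  · intro A; exact Set.subset_union_left
end

section
/- For every closure operation c : 𝒫(X) → 𝒫(X) on a set X, Ψ(Φ(c)) = c; that is, for every A ⊆ X, A ∪ (c(A) ∩ c(X \ A)) = c(A). -/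
/-- For every closure operation `c`, `Ψ(Φ(c)) = c`; that is, for every
`A ⊆ X`, `A ∪ (c(A) ∩ c(X \ A)) = c(A)`. -/
theorem psi_phi_eq_id {X : Type*} (c : Set X → Set X)
    (hc : IsClosure c) :
    ∀ A : Set X, A ∪ (c A ∩ c Aᶜ) = c A := by
  obtain ⟨-, -, -, -, h5⟩ := hc
  intro A
  apply Set.Subset.antisymm
  · intro x hx
    rcases hx with hx | ⟨hx, -⟩
    · exact h5 A hx
    · exact hx
  · intro x hx
    by_cases hA : x ∈ A
    · exact Or.inl hA
    · exact Or.inr ⟨hx, h5 Aᶜ hA⟩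
end

section
/- For every operation of boundary ∂ : 𝒫(X) → 𝒫(X) on a set X, Φ(Ψ(∂)) = ∂; that is, for every A ⊆ X, (A ∪ ∂A) ∩ ((X \ A) ∪ ∂(X \ A)) = ∂A. -/
/-- For every operation of boundary `∂`, `Φ(Ψ(∂)) = ∂`; that is, for every
`A ⊆ X`, `(A ∪ ∂A) ∩ ((X \ A) ∪ ∂(X \ A)) = ∂A`. -/
theorem phi_psi_eq_id {X : Type*} (d : Set X → Set X)
    (hd : IsBoundary d) :
    ∀ A : Set X, (A ∪ d A) ∩ (Aᶜ ∪ d Aᶜ) = d A := by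
  intro A
  rw [← hd.2.2.2.2 A]
  ext x
  simp only [Set.mem_inter_iff, Set.mem_union, Set.mem_compl_iff]
  tauto
end

section
/- The map Φ, which sends op : 𝒫(X) → 𝒫(X) to the map A ↦ op(A) ∩ op(X \ A), restricts to a bijection from the set 𝒞 of closure operations on X onto the set ℬ of operations of boundary on X, with inverse the restriction of Ψ, which sends op to the map A ↦ A ∪ op(A). -/
/-- `Φ(op)(A) = op(A) ∩ op(X \ A)`. -/
def Phi {X : Type*} (op : Set X → Set X) : Set X → Set X :=
  fun A => op A ∩ op Aᶜ

/-- `Ψ(op)(A) = A ∪ op(A)`. -/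
def Psi {X : Type*} (op : Set X → Set X) : Set X → Set X :=
  fun A => A ∪ op A

/-- `Φ` restricts to a bijection from the set of closure operations onto the
set of operations of boundary, with inverse the restriction of `Ψ`. -/
theorem phi_psi_bijection (X : Type*) :
    (∀ c : Set X → Set X, IsClosure c → IsBoundary (Phi c)) ∧
    (∀ d : Set X → Set X, IsBoundary d → IsClosure (Psi d)) ∧
    (∀ c : Set X → Set X, IsClosure c → Psi (Phi c) = c) ∧
    (∀ d : Set X → Set X, IsBoundary d → Phi (Psi d) = d) := by
  refine ⟨?_, ?_, ?_, ?_⟩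
  · rintro c ⟨h1, h2, h3, h4, h5⟩
    refine ⟨?_, ?_, ?_, ?_, ?_⟩
    · simp [Phi, h1]
    · intro A x hx
      have hsub : c (Phi c A) ⊆ Phi c A := by
        intro y hy
        exact ⟨h2 A (h4 _ _ (Set.inter_subset_left) hy),
               h2 Aᶜ (h4 _ _ (Set.inter_subset_right) hy)⟩
      exact hsub hx.1
    · intro A B x hx
      obtain ⟨hx1, hx2⟩ := hx
      have h2' : x ∈ c Aᶜ ∩ c Bᶜ := by
        have : c (A ∪ B)ᶜ ⊆ c Aᶜ ∩ c Bᶜ := by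
          rw [Set.compl_union]
          exact Set.subset_inter (h4 _ _ Set.inter_subset_left)
            (h4 _ _ Set.inter_subset_right)
        exact this hx2
      rcases h3 A B hx1 with h | h
      · exact Or.inl ⟨h, h2'.1⟩
      · exact Or.inr ⟨h, h2'.2⟩
    · intro A B hAB x hx
      by_cases hxB : x ∈ B
      · exact Or.inl hxB
      · exact Or.inr ⟨h4 A B hAB hx.1, h5 Bᶜ hxB⟩
    · intro A
      simp only [Phi, compl_compl]
      exact Set.inter_comm _ _
  · rintro d ⟨h1, h2, h3, h4, h5⟩
    refine ⟨?_, ?_, ?_, ?_, ?_⟩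
    · simp [Psi, h1]
    · intro A x hx
      rcases hx with hx | hx
      · exact hx
      · have : d (A ∪ d A) ⊆ A ∪ d A := by
          intro y hy
          rcases h3 A (d A) hy with h | h
          · exact Or.inr h
          · exact Or.inr (h2 A h)
        exact this hx
    · intro A B x hx
      rcases hx with hx | hx
      · rcases hx with h | h
        · exact Or.inl (Or.inl h)
        · exact Or.inr (Or.inl h)
      · rcases h3 A B hx with h | h
        · exact Or.inl (Or.inr h)
        · exact Or.inr (Or.inr h)
    · intro A B hAB x hx
      rcases hx with hx | hx
      · exact Or.inl (hAB hx)
      · exact h4 A B hAB hx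
    · intro A
      exact Set.subset_union_left
  · rintro c ⟨h1, h2, h3, h4, h5⟩
    funext A
    ext x
    constructor
    · rintro (hx | hx)
      · exact h5 A hx
      · exact hx.1
    · intro hx
      by_cases hxA : x ∈ A
      · exact Or.inl hxA
      · exact Or.inr ⟨hx, h5 Aᶜ hxA⟩
  · rintro d ⟨h1, h2, h3, h4, h5⟩
    funext A
    ext x
    simp only [Phi, Psi, Set.mem_inter_iff, Set.mem_union, ← h5 A]
    constructor
    · rintro ⟨hA | hA, hAc | hAc⟩
      · exact absurd hA hAc
      · exact hAc
      · exact hA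
      · exact hA
    · intro h
      exact ⟨Or.inr h, Or.inr h⟩
end

section
/- Let X = ℕ and define ∂₂ : 𝒫(ℕ) → 𝒫(ℕ) by ∂₂(A) = { x ∈ ℕ : inf_{a ∈ A} |x − a| = 1 or inf_{b ∈ ℕ \ A} |x − b| = 1 } (equivalently, x ∈ ∂₂(A) iff either x ∉ A and some a ∈ A has |x − a| = 1, or x ∈ A and some b ∉ A has |x − b| = 1). Then ∂₂ satisfies axioms (β1), (β3), (β4) and (β5), but does not satisfy axiom (β2). -/
/-- On `X = ℕ`, the operation
`∂₂(A) = {x : inf_{a ∈ A} |x − a| = 1 ∨ inf_{b ∉ A} |x − b| = 1}`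
(equivalently: `x ∉ A` and some `a ∈ A` has `|x − a| = 1`, or `x ∈ A` and
some `b ∉ A` has `|x − b| = 1`) satisfies (β1), (β3), (β4), (β5) but
not (β2). -/
theorem example_not_beta2
    (d : Set ℕ → Set ℕ)
    (hd : ∀ A : Set ℕ, d A =
      {x : ℕ | (x ∉ A ∧ ∃ a ∈ A, Nat.dist x a = 1) ∨
               (x ∈ A ∧ ∃ b ∉ A, Nat.dist x b = 1)}) :
    (d ∅ = ∅) ∧
    (∀ A B : Set ℕ, d (A ∪ B) ⊆ d A ∪ d B) ∧
    (∀ A B : Set ℕ, A ⊆ B → d A ⊆ B ∪ d B) ∧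
    (∀ A : Set ℕ, d A = d Aᶜ) ∧
    ¬ (∀ A : Set ℕ, d (d A) ⊆ d A) := by
  refine ⟨?_, ?_, ?_, ?_, ?_⟩
  · rw [hd]
    ext x
    simp
  · intro A B x hx
    rw [hd] at hx
    rcases hx with ⟨hxn, a, ha, hda⟩ | ⟨hxm, b, hb, hdb⟩
    · simp only [Set.mem_union] at hxn ha
      push_neg at hxn
      rcases ha with ha | ha
      · left; rw [hd]; exact Or.inl ⟨hxn.1, a, ha, hda⟩
      · right; rw [hd]; exact Or.inl ⟨hxn.2, a, ha, hda⟩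
    · simp only [Set.mem_union] at hxm hb
      push_neg at hb
      rcases hxm with hxm | hxm
      · left; rw [hd]; exact Or.inr ⟨hxm, b, hb.1, hdb⟩
      · right; rw [hd]; exact Or.inr ⟨hxm, b, hb.2, hdb⟩
  · intro A B hAB x hx
    rw [hd] at hx
    rcases hx with ⟨hxn, a, ha, hda⟩ | ⟨hxm, _⟩
    · by_cases hxB : x ∈ B
      · exact Or.inl hxB
      · exact Or.inr (by rw [hd]; exact Or.inl ⟨hxB, a, hAB ha, hda⟩)
    · exact Or.inl (hAB hxm)
  · intro A
    rw [hd, hd]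
    ext x
    simp only [Set.mem_setOf_eq, Set.mem_compl_iff, not_not]
    constructor
    · rintro (⟨h1, a, ha, hda⟩ | ⟨h1, b, hb, hdb⟩)
      · exact Or.inr ⟨h1, a, ha, hda⟩
      · exact Or.inl ⟨h1, b, hb, hdb⟩
    · rintro (⟨h1, a, ha, hda⟩ | ⟨h1, b, hb, hdb⟩)
      · exact Or.inr ⟨h1, a, ha, hda⟩
      · exact Or.inl ⟨h1, b, hb, hdb⟩
  · intro h
    have h2 : (2 : ℕ) ∈ d (d ({0} : Set ℕ)) := by
      have hD : d ({0} : Set ℕ) = {0, 1} := by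
        rw [hd]
        ext x
        simp only [Set.mem_setOf_eq, Set.mem_singleton_iff, Set.mem_insert_iff]
        constructor
        · rintro (⟨hx, a, ha, hda⟩ | ⟨hx, _⟩)
          · subst ha
            right
            simp [Nat.dist] at hda
            omega
          · exact Or.inl hx
        · rintro (rfl | rfl)
          · exact Or.inr ⟨rfl, 1, by simp, by simp [Nat.dist]⟩
          · exact Or.inl ⟨by simp, 0, rfl, by simp [Nat.dist]⟩
      rw [hD, hd]
      refine Or.inl ⟨by simp, 1, by simp, by simp [Nat.dist]⟩
    have := h _ h2
    rw [hd] at this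
    rcases this with ⟨_, a, ha, hda⟩ | ⟨hx, _⟩
    · rw [Set.mem_singleton_iff] at ha
      subst ha
      simp [Nat.dist] at hda
    · exact absurd hx (by simp)
end

section
/- Let X be a set with at least two elements, fix x₀ ∈ X, and define ∂₅ : 𝒫(X) → 𝒫(X) by ∂₅(∅) = ∅ and ∂₅(A) = A ∪ {x₀} for every nonempty A ⊆ X. Then ∂₅ satisfies axioms (β1), (β2), (β3) and (β4), but does not satisfy axiom (β5). -/
/-- Let `X` have at least two elements and fix `x₀ ∈ X`. The operation `∂₅`
with `∂₅(∅) = ∅` and `∂₅(A) = A ∪ {x₀}` for nonempty `A` satisfies (β1),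
(β2), (β3), (β4) but not (β5). -/
theorem example_not_beta5 {X : Type*} [Nontrivial X] (x₀ : X)
    (d : Set X → Set X)
    (h0 : d ∅ = ∅)
    (hd : ∀ A : Set X, A.Nonempty → d A = A ∪ {x₀}) :
    (d ∅ = ∅) ∧
    (∀ A : Set X, d (d A) ⊆ d A) ∧
    (∀ A B : Set X, d (A ∪ B) ⊆ d A ∪ d B) ∧
    (∀ A B : Set X, A ⊆ B → d A ⊆ B ∪ d B) ∧
    ¬ (∀ A : Set X, d A = d Aᶜ) := by
  refine ⟨h0, ?_, ?_, ?_, ?_⟩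
  · intro A
    rcases A.eq_empty_or_nonempty with rfl | hA
    · rw [h0, h0]
    · rw [hd A hA, hd _ (hA.mono Set.subset_union_left)]
      intro x hx
      rcases hx with hx | hx
      · exact hx
      · exact Or.inr hx
  · intro A B
    rcases (A ∪ B).eq_empty_or_nonempty with hAB | hAB
    · rw [hAB, h0]; exact Set.empty_subset _
    · rw [hd _ hAB]
      intro x hx
      rcases hx with (hx | hx) | hx
      · rw [hd A ⟨x, hx⟩]; exact Or.inl (Or.inl hx)
      · rw [hd B ⟨x, hx⟩]; exact Or.inr (Or.inl hx)
      · rcases Set.union_nonempty.mp hAB with hA | hB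
        · rw [hd A hA]; exact Or.inl (Or.inr hx)
        · rw [hd B hB]; exact Or.inr (Or.inr hx)
  · intro A B hAB
    rcases A.eq_empty_or_nonempty with rfl | hA
    · rw [h0]; exact Set.empty_subset _
    · rw [hd A hA, hd B (hA.mono hAB)]
      intro x hx
      rcases hx with hx | hx
      · exact Or.inl (hAB hx)
      · exact Or.inr (Or.inr hx)
  · intro h
    have h1 := h ∅
    rw [h0, Set.compl_empty, hd Set.univ Set.univ_nonempty] at h1
    obtain ⟨y, hy⟩ := exists_ne x₀
    exact absurd (h1 ▸ Or.inl (Set.mem_univ y) : y ∈ (∅ : Set X)) (Set.notMem_empty y)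
end

section
/- Let X be a nonempty set. Every closure operation c : 𝒫(X) → 𝒫(X) satisfies the boundary axioms (β1), (β2), (β3) and (β4), but no closure operation on X satisfies axiom (β5); that is, for every closure operation c there exists A ⊆ X with c(A) ≠ c(X \ A). -/
/-- On a nonempty set `X`, every closure operation satisfies the boundary
axioms (β1)–(β4), but never (β5): there is always `A ⊆ X` with
`c(A) ≠ c(X \ A)`. -/
theorem closure_satisfies_beta1_to_beta4_never_beta5
    {X : Type*} [Nonempty X] (c : Set X → Set X) (hc : IsClosure c) :
    (c ∅ = ∅) ∧
    (∀ A : Set X, c (c A) ⊆ c A) ∧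
    (∀ A B : Set X, c (A ∪ B) ⊆ c A ∪ c B) ∧
    (∀ A B : Set X, A ⊆ B → c A ⊆ B ∪ c B) ∧
    (∃ A : Set X, c A ≠ c Aᶜ) := by
  obtain ⟨h1, h2, h3, h4, h5⟩ := hc
  refine ⟨h1, h2, h3, fun A B hAB => (h4 A B hAB).trans (Set.subset_union_right), ⟨∅, ?_⟩⟩
  intro h
  obtain ⟨x⟩ := ‹Nonempty X›
  have : x ∈ c ∅ := by
    rw [h]
    exact h5 _ (by simp)
  rw [h1] at this
  exact this
end
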